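/- arXiv:1511.00284 — 3 statements merged into one kernel-verified Lean document; each statement's English description precedes it below -/
import Mathlib

section
/- Let C = γγᵀ + Λ with Λ = diag(σ₁²,...,σ_N²), 0 < σᵢ² ≤ c₅. Let 𝔢₁ be a unit eigenvector of C for the largest eigenvalue λ₁, normalized so that γᵀ𝔢₁ ≥ 0. Then ‖𝔢₁ − γ/‖γ‖‖² ≤ 2c₅/‖γ‖². -/
open Matrix Finset

/-! The Rayleigh quotient of `C = γγᵀ + Λ` at `γ/‖γ‖` is at least `‖γ‖²`, and at `𝔢₁` it equals
`(γᵀ𝔢₁)² + 𝔢₁ᵀΛ𝔢₁ ≤ (γᵀ𝔢₁)² + c₅`. Maximality of `λ₁` therefore gives `1 - t² ≤ c₅/‖γ‖²` for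
`t = γᵀ𝔢₁/‖γ‖ ≥ 0`, while `‖𝔢₁ - γ/‖γ‖‖² = 2(1 - t)`, which is at most `2(1 - t²)` when `t ≤ 1`
and negative otherwise. -/

variable {ι : Type*} [Fintype ι]

theorem dotProduct_mulVec_vecMulVec_add_diagonal {R : Type*} [CommRing R] [DecidableEq ι]
    (γ σ v : ι → R) :
    v ⬝ᵥ ((vecMulVec γ γ + diagonal σ) *ᵥ v) = (γ ⬝ᵥ v) ^ 2 + ∑ i, σ i * v i ^ 2 := by
  rw [add_mulVec, dotProduct_add, vecMulVec_mulVec]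
  simp only [dotProduct, Pi.smul_apply, mulVec_diagonal, MulOpposite.smul_eq_mul_unop,
    MulOpposite.unop_op]
  rw [sq, sum_mul]
  congr 1 <;> refine sum_congr rfl fun i _ => by ring

theorem sq_dotProduct_le_dotProduct_mulVec_vecMulVec_add_diagonal [DecidableEq ι]
    {γ σ : ι → ℝ} (hσ : ∀ i, 0 ≤ σ i) (v : ι → ℝ) :
    (γ ⬝ᵥ v) ^ 2 ≤ v ⬝ᵥ ((vecMulVec γ γ + diagonal σ) *ᵥ v) := by
  rw [dotProduct_mulVec_vecMulVec_add_diagonal]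
  exact le_add_of_nonneg_right (sum_nonneg fun i _ => mul_nonneg (hσ i) (sq_nonneg _))

theorem dotProduct_mulVec_vecMulVec_add_diagonal_le [DecidableEq ι] {γ σ v : ι → ℝ} {c : ℝ}
    (hσ : ∀ i, σ i ≤ c) (hv : ∑ i, v i ^ 2 = 1) :
    v ⬝ᵥ ((vecMulVec γ γ + diagonal σ) *ᵥ v) ≤ (γ ⬝ᵥ v) ^ 2 + c := by
  rw [dotProduct_mulVec_vecMulVec_add_diagonal]
  gcongr
  calc ∑ i, σ i * v i ^ 2 ≤ ∑ i, c * v i ^ 2 := by gcongr with i; exact hσ i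
    _ = c := by rw [← mul_sum, hv, mul_one]

theorem sum_sq_pos_of_ne_zero {γ : ι → ℝ} (hγ : γ ≠ 0) : 0 < ∑ i, γ i ^ 2 := by
  obtain ⟨i, hi⟩ := Function.ne_iff.mp hγ
  exact sum_pos' (fun j _ => sq_nonneg _) ⟨i, mem_univ i, pow_two_pos_of_ne_zero hi⟩

theorem dotProduct_mulVec_eq_of_mulVec_eq_smul {R : Type*} [CommRing R] {C : Matrix ι ι R}
    {e : ι → R} {l : R} (heig : C *ᵥ e = l • e) (he : ∑ i, e i ^ 2 = 1) :
    e ⬝ᵥ (C *ᵥ e) = l := by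
  rw [heig, dotProduct_smul, dotProduct, smul_eq_mul]
  simp [← sq, he]

theorem dotProduct_div_sqrt_sum_sq (γ : ι → ℝ) :
    γ ⬝ᵥ (fun i => γ i / √(∑ j, γ j ^ 2)) = √(∑ j, γ j ^ 2) := by
  simp only [dotProduct, mul_div_assoc', ← sq, ← sum_div, Real.div_sqrt]

theorem sum_div_sqrt_sum_sq_sq {γ : ι → ℝ} (hγ : γ ≠ 0) :
    ∑ i, (γ i / √(∑ j, γ j ^ 2)) ^ 2 = 1 := by
  have hg := sum_sq_pos_of_ne_zero hγ
  simp only [div_pow, ← sum_div, Real.sq_sqrt hg.le, div_self hg.ne']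

theorem sum_sub_div_sqrt_sum_sq_sq {e γ : ι → ℝ} (he : ∑ i, e i ^ 2 = 1) (hγ : γ ≠ 0) :
    ∑ i, (e i - γ i / √(∑ j, γ j ^ 2)) ^ 2 = 2 * (1 - γ ⬝ᵥ e / √(∑ j, γ j ^ 2)) := by
  set r := √(∑ j, γ j ^ 2)
  have hexpand : ∑ i, (e i - γ i / r) ^ 2
      = ∑ i, e i ^ 2 - 2 * (γ ⬝ᵥ e / r) + ∑ i, (γ i / r) ^ 2 := by
    simp only [sub_sq, sum_add_distrib, sum_sub_distrib, dotProduct, sum_div, mul_sum]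
    congr 2
    exact sum_congr rfl fun i _ => by ring
  rw [hexpand, he, sum_div_sqrt_sum_sq_sq hγ]
  ring

theorem one_sub_div_le_div_sq_of_sq_sub_le_sq {t r c : ℝ} (ht : 0 ≤ t) (hr : 0 < r) (hc : 0 ≤ c)
    (h : r ^ 2 - c ≤ t ^ 2) : 1 - t / r ≤ c / r ^ 2 := by
  rw [one_sub_div hr.ne', div_le_div_iff₀ hr (by positivity)]
  rcases le_total t r with htr | hrt
  · nlinarith [mul_le_mul_of_nonneg_left htr ht]
  · nlinarith [mul_le_mul_of_nonneg_left hrt hr.le]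

/-- For `C = γγᵀ + Λ` with `Λ` diagonal with entries in `(0, c₅]`,
if `𝔢₁` is a unit eigenvector for the largest eigenvalue `λ₁`, normalized so that
`γᵀ𝔢₁ ≥ 0`, then `‖𝔢₁ − γ/‖γ‖‖² ≤ 2 c₅ / ‖γ‖²`. -/
theorem top_eigenvector_close_to_gamma
    (N : ℕ) (γ : Fin N → ℝ) (σ : Fin N → ℝ) (c₅ : ℝ)
    (hσ : ∀ i, 0 < σ i ∧ σ i ≤ c₅)
    (hγ : γ ≠ 0)
    (C : Matrix (Fin N) (Fin N) ℝ)
    (hC : C = Matrix.of (fun i j => γ i * γ j + if i = j then σ i else 0))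
    (lam1 : ℝ) (e1 : Fin N → ℝ)
    (he1norm : (∑ i, e1 i ^ 2) = 1)
    (heig : C *ᵥ e1 = lam1 • e1)
    (hmax : IsGreatest
      {x : ℝ | ∃ v : Fin N → ℝ, (∑ i, v i ^ 2) = 1 ∧ x = v ⬝ᵥ (C *ᵥ v)} lam1)
    (hsign : 0 ≤ γ ⬝ᵥ e1) :
    (∑ i, (e1 i - γ i / Real.sqrt (∑ j, γ j ^ 2)) ^ 2)
      ≤ 2 * c₅ / (∑ j, γ j ^ 2) := by
  have hC' : C = vecMulVec γ γ + diagonal σ := by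
    ext i j
    simp [hC, vecMulVec_apply, diagonal_apply]
  set g := ∑ j, γ j ^ 2
  have hg : 0 < g := sum_sq_pos_of_ne_zero hγ
  have hrg : √g ^ 2 = g := Real.sq_sqrt hg.le
  set u : Fin N → ℝ := fun i => γ i / √g
  have hg_le : g ≤ lam1 := calc
    g = (γ ⬝ᵥ u) ^ 2 := by rw [dotProduct_div_sqrt_sum_sq, hrg]
    _ ≤ u ⬝ᵥ (C *ᵥ u) :=
      hC' ▸ sq_dotProduct_le_dotProduct_mulVec_vecMulVec_add_diagonal (fun i => (hσ i).1.le) u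
    _ ≤ lam1 := hmax.2 ⟨u, sum_div_sqrt_sum_sq_sq hγ, rfl⟩
  have hle_c₅ : lam1 ≤ (γ ⬝ᵥ e1) ^ 2 + c₅ := calc
    lam1 = e1 ⬝ᵥ (C *ᵥ e1) := (dotProduct_mulVec_eq_of_mulVec_eq_smul heig he1norm).symm
    _ ≤ _ := hC' ▸ dotProduct_mulVec_vecMulVec_add_diagonal_le (fun i => (hσ i).2) he1norm
  have hc₅ : 0 ≤ c₅ := by
    obtain ⟨i, -⟩ := Function.ne_iff.mp hγ
    exact (hσ i).1.le.trans (hσ i).2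
  have hcos := one_sub_div_le_div_sq_of_sq_sub_le_sq hsign (Real.sqrt_pos.2 hg) hc₅
    (by rw [hrg]; linarith)
  rw [hrg] at hcos
  rw [sum_sub_div_sqrt_sum_sq_sq he1norm hγ, mul_div_assoc]
  linarith
end

section
/- Let C = γγᵀ + Λ with Λ diagonal, entries in (0, c₅]. For any unit eigenvector 𝔢ᵢ (i ≥ 2) of C with eigenvalue λᵢ, one has λᵢ = (γᵀ𝔢ᵢ)² + 𝔢ᵢᵀΛ𝔢ᵢ ≤ (γᵀ𝔢ᵢ)² + c₅. Combined with |γᵀ𝔢ᵢ| ≤ √(2c₅) (valid when ‖γ‖² ≥ 2c₅), this yields λᵢ ≤ 3c₅ for all i ≥ 2. -/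
/-! The Rayleigh quotient of a unit eigenvector is its eigenvalue. For `γγᵀ + Λ` it splits as
`(γᵀe)²` plus a convex combination of the diagonal entries `σₖ` (weights `eₖ²`), and the latter
is at most `c₅`; the bound `(γᵀe)² ≤ 2c₅` then gives `3c₅`. -/

open Matrix Finset

section

variable {n R : Type*}

theorem Matrix.eq_dotProduct_mulVec_of_mulVec_eq_smul [Fintype n] [CommSemiring R]
    {A : Matrix n n R} {e : n → R} {μ : R} (he : e ⬝ᵥ e = 1) (h : A *ᵥ e = μ • e) :
    μ = e ⬝ᵥ A *ᵥ e := by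
  rw [h, dotProduct_smul, he, smul_eq_mul, mul_one]

theorem Matrix.of_mul_add_ite_eq_vecMulVec_add_diagonal [Semiring R] [DecidableEq n]
    (γ σ : n → R) :
    Matrix.of (fun i j => γ i * γ j + if i = j then σ i else 0) = vecMulVec γ γ + diagonal σ := by
  ext i j
  simp [vecMulVec_apply, diagonal_apply]

theorem Matrix.dotProduct_vecMulVec_add_diagonal_mulVec [Fintype n] [CommSemiring R]
    [DecidableEq n] (γ σ e : n → R) :
    e ⬝ᵥ (vecMulVec γ γ + diagonal σ) *ᵥ e = (γ ⬝ᵥ e) ^ 2 + ∑ k, σ k * e k ^ 2 := by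
  rw [add_mulVec, dotProduct_add, vecMulVec_mulVec, op_smul_eq_smul, dotProduct_smul,
    dotProduct_comm e γ, smul_eq_mul, sq]
  congr 1
  exact Finset.sum_congr rfl fun k _ => by rw [mulVec_diagonal]; ring

end

theorem Finset.sum_mul_sq_le_mul_sum_sq {ι R : Type*} [CommRing R] [LinearOrder R]
    [IsOrderedRing R] (s : Finset ι) {σ : ι → R} {c : R} (hσ : ∀ k ∈ s, σ k ≤ c) (e : ι → R) :
    ∑ k ∈ s, σ k * e k ^ 2 ≤ c * ∑ k ∈ s, e k ^ 2 := by
  rw [Finset.mul_sum]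
  exact Finset.sum_le_sum fun k hk => mul_le_mul_of_nonneg_right (hσ k hk) (sq_nonneg _)

theorem lower_eigenvalues_bounded_general
    (N : ℕ) (γ : Fin N → ℝ) (σ : Fin N → ℝ) (c₅ : ℝ)
    (hσ : ∀ i, 0 < σ i ∧ σ i ≤ c₅)
    (C : Matrix (Fin N) (Fin N) ℝ)
    (hC : C = Matrix.of (fun i j => γ i * γ j + if i = j then σ i else 0))
    (e : Fin N → ℝ) (μ : ℝ)
    (hnorm : (∑ i, e i ^ 2) = 1)
    (heig : C *ᵥ e = μ • e) :
    μ = (γ ⬝ᵥ e) ^ 2 + ∑ k, σ k * e k ^ 2 ∧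
    μ ≤ (γ ⬝ᵥ e) ^ 2 + c₅ ∧
    (|γ ⬝ᵥ e| ≤ Real.sqrt (2 * c₅) → μ ≤ 3 * c₅) := by
  have hunit : e ⬝ᵥ e = 1 := by simpa [dotProduct, sq] using hnorm
  have hμ : μ = (γ ⬝ᵥ e) ^ 2 + ∑ k, σ k * e k ^ 2 := by
    rw [eq_dotProduct_mulVec_of_mulVec_eq_smul hunit heig, hC,
      of_mul_add_ite_eq_vecMulVec_add_diagonal, dotProduct_vecMulVec_add_diagonal_mulVec]
  have hweighted : ∑ k, σ k * e k ^ 2 ≤ c₅ := by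
    simpa [hnorm] using sum_mul_sq_le_mul_sum_sq univ (fun k _ => (hσ k).2) e
  refine ⟨hμ, by linarith, fun hγe => ?_⟩
  -- `0 ≤ c₅` is what keeps `√(2 * c₅)` away from its junk value on negative arguments.
  have hweighted_nonneg : 0 ≤ ∑ k, σ k * e k ^ 2 :=
    sum_nonneg fun k _ => mul_nonneg (hσ k).1.le (sq_nonneg _)
  have hγe_sq : (γ ⬝ᵥ e) ^ 2 ≤ 2 * c₅ := by
    rw [← sq_abs]
    exact (Real.le_sqrt (abs_nonneg _) (by linarith)).1 hγe
  linarith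

/-- For `C = γγᵀ + Λ` with `Λ` diagonal, entries in `(0, c₅]`, and a
unit eigenvector `𝔢` of `C` with eigenvalue `μ`, one has
`μ = (γᵀ𝔢)² + 𝔢ᵀΛ𝔢 ≤ (γᵀ𝔢)² + c₅`, and if moreover `|γᵀ𝔢| ≤ √(2c₅)`
(valid for the lower eigenvectors when `‖γ‖² ≥ 2c₅`), then `μ ≤ 3c₅`. -/
theorem lower_eigenvalues_bounded
    (N : ℕ) (γ : Fin N → ℝ) (σ : Fin N → ℝ) (c₅ : ℝ)
    (hσ : ∀ i, 0 < σ i ∧ σ i ≤ c₅)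
    (hγbig : 2 * c₅ ≤ ∑ j, γ j ^ 2)
    (C : Matrix (Fin N) (Fin N) ℝ)
    (hC : C = Matrix.of (fun i j => γ i * γ j + if i = j then σ i else 0))
    (e : Fin N → ℝ) (μ : ℝ)
    (hnorm : (∑ i, e i ^ 2) = 1)
    (heig : C *ᵥ e = μ • e) :
    μ = (γ ⬝ᵥ e) ^ 2 + ∑ k, σ k * e k ^ 2 ∧
    μ ≤ (γ ⬝ᵥ e) ^ 2 + c₅ ∧
    (|γ ⬝ᵥ e| ≤ Real.sqrt (2 * c₅) → μ ≤ 3 * c₅) :=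
  lower_eigenvalues_bounded_general N γ σ c₅ hσ C hC e μ hnorm heig
end

section
/- Suppose E max_{1≤v≤z}|S_v|^6 ≤ c·z³ for all z ≥ 1, where S_v = ∑_{s=1}^v Y_s. Then there is a constant C (depending on c and ρ) such that for all u > 0 and all T ≥ 2, P(max_{1≤v≤T} v^{−1/2}|S_v| > u (log T)^{1/6}) ≤ C u^{−6}, and consequently E(max_{1≤v≤T} v^{−1/2}|S_v|)² ≤ C' (log T)^{1/3}. -/
/-!
Split `[1, T]` into the dyadic blocks `2^k ≤ v ≤ 2^(k+1)`, `k ≤ log₂ T`. On the `k`-th block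
`v^(-1/2)|S_v| ≤ 2^(-k/2) max_{v ≤ 2^(k+1)} |S_v|`, so the sixth power of the normalized
maximum is bounded by `∑_k 2^(-3k) max_{v ≤ 2^(k+1)} |S_v|^6`, each of whose terms has
expectation at most `8c`. Hence `E (max_{v ≤ T} v^(-1/2)|S_v|)^6 = O(log T)`, and both bounds
follow from this single moment bound: the tail bound by Markov's inequality at level
`u (log T)^(1/6)`, the `L²` bound from `t² ≤ t⁶ / (3a²) + 2a/3` with `a = (log T)^(1/3)`.
-/

open MeasureTheory Finset

-- Over `ℝ`, the indices outside `s` contribute `sSup ∅ = 0` to `⨆ j ∈ s, f j`; hence the signs.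
lemma le_biSup_of_nonneg {ι : Type*} {s : Finset ι} {f : ι → ℝ} {i : ι} (hi : i ∈ s)
    (hf : 0 ≤ f i) : f i ≤ ⨆ j ∈ s, f j := by
  have h : ∃ j ∈ s, sSup ∅ ≤ f j := ⟨i, hi, by rwa [Real.sSup_empty]⟩
  rw [s.ciSup_eq_max'_image f h]
  exact le_max' _ _ (mem_image_of_mem f hi)

lemma exists_mem_eq_biSup_of_nonneg {ι : Type*} {s : Finset ι} (hs : s.Nonempty) {f : ι → ℝ}
    (hf : ∀ i ∈ s, 0 ≤ f i) : ∃ i ∈ s, f i = ⨆ j ∈ s, f j := by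
  obtain ⟨i, hi⟩ := hs
  simpa using s.ciSup_mem_image f ⟨i, hi, by simpa using hf i hi⟩

noncomputable section Deterministic

variable (S : ℕ → ℝ)

def maxAbs (n : ℕ) : ℝ := ⨆ v ∈ Icc 1 n, |S v|

def normalizedMax (T : ℕ) : ℝ := ⨆ v ∈ Icc 1 T, |S v| / √v

lemma maxAbs_nonneg (n : ℕ) : 0 ≤ maxAbs S n :=
  Real.iSup_nonneg fun _ => Real.iSup_nonneg fun _ => abs_nonneg _

lemma normalizedMax_nonneg (T : ℕ) : 0 ≤ normalizedMax S T :=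
  Real.iSup_nonneg fun _ => Real.iSup_nonneg fun _ => by positivity

lemma abs_le_maxAbs {v n : ℕ} (hv : v ∈ Icc 1 n) : |S v| ≤ maxAbs S n :=
  le_biSup_of_nonneg (f := fun v => |S v|) hv (abs_nonneg _)

lemma div_sqrt_pow_le_maxAbs (p : ℕ) {k v : ℕ} (hkv : 2 ^ k ≤ v) (hvk : v ≤ 2 ^ (k + 1)) :
    (|S v| / √v) ^ (2 * p) ≤ maxAbs S (2 ^ (k + 1)) ^ (2 * p) / 2 ^ (p * k) := by
  have hkv' : (2 : ℝ) ^ k ≤ v := by exact_mod_cast hkv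
  have hv : 1 ≤ v := Nat.one_le_two_pow.trans hkv
  rw [div_pow, pow_mul √_, Real.sq_sqrt (Nat.cast_nonneg v), pow_mul' (2 : ℝ) p k]
  have hSv := abs_le_maxAbs S (mem_Icc.2 ⟨hv, hvk⟩)
  gcongr
  exact pow_nonneg (maxAbs_nonneg S _) _

theorem normalizedMax_pow_le_sum (p : ℕ) {T : ℕ} (hT : 1 ≤ T) :
    normalizedMax S T ^ (2 * p) ≤
      ∑ k ∈ range (Nat.log 2 T + 1), maxAbs S (2 ^ (k + 1)) ^ (2 * p) / 2 ^ (p * k) := by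
  obtain ⟨v, hv, hXv⟩ :=
    exists_mem_eq_biSup_of_nonneg (f := fun v : ℕ => |S v| / √v) (nonempty_Icc.2 hT)
      fun v _ => by positivity
  rw [mem_Icc] at hv
  calc normalizedMax S T ^ (2 * p) = (|S v| / √v) ^ (2 * p) := by rw [normalizedMax, hXv]
    _ ≤ maxAbs S (2 ^ (Nat.log 2 v + 1)) ^ (2 * p) / 2 ^ (p * Nat.log 2 v) :=
      div_sqrt_pow_le_maxAbs S p (Nat.pow_log_le_self 2 (by omega))
        (Nat.lt_pow_succ_log_self one_lt_two v).le
    _ ≤ _ := single_le_sum (f := fun k => maxAbs S (2 ^ (k + 1)) ^ (2 * p) / 2 ^ (p * k))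
      (fun k _ => div_nonneg (pow_nonneg (maxAbs_nonneg S _) _) (by positivity))
      (mem_range.2 (Nat.lt_succ_of_le (Nat.log_mono_right hv.2)))

end Deterministic

lemma natLog_add_one_le_two_mul_logb {b T : ℕ} (hb : 1 < b) (hbT : b ≤ T) :
    (Nat.log b T + 1 : ℝ) ≤ 2 * Real.logb b T := by
  have hb' : (1 : ℝ) < b := by exact_mod_cast hb
  have hone : 1 ≤ Real.logb b T := by
    rw [Real.le_logb_iff_rpow_le hb' (by exact_mod_cast (hb.trans_le hbT).pos), Real.rpow_one]
    exact_mod_cast hbT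
  linarith [Real.natLog_le_logb T b]

lemma sq_le_pow_six_div_add {a : ℝ} (ha : 0 < a) (t : ℝ) :
    t ^ 2 ≤ t ^ 6 / (3 * a ^ 2) + 2 * a / 3 := by
  have hfactor : t ^ 6 / (3 * a ^ 2) + 2 * a / 3 - t ^ 2
      = (t ^ 2 - a) ^ 2 * (t ^ 2 + 2 * a) / (3 * a ^ 2) := by
    field_simp
    ring
  rw [← sub_nonneg, hfactor]
  positivity

section Probabilistic

variable {Ω : Type*} [MeasurableSpace Ω] {μ : Measure Ω}

lemma measureReal_lt_le_integral_pow_div [IsFiniteMeasure μ] {f : Ω → ℝ} (hf : 0 ≤ f)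
    {n : ℕ} (hfn : Integrable (fun ω => f ω ^ n) μ) {x : ℝ} (hx : 0 < x) :
    μ.real {ω | x < f ω} ≤ (∫ ω, f ω ^ n ∂μ) / x ^ n := by
  rw [le_div_iff₀ (by positivity), mul_comm]
  have hsub : {ω | x < f ω} ⊆ {ω | x ^ n ≤ f ω ^ n} :=
    fun ω hω => pow_le_pow_left₀ hx.le (le_of_lt hω) n
  calc x ^ n * μ.real {ω | x < f ω} ≤ x ^ n * μ.real {ω | x ^ n ≤ f ω ^ n} :=
        mul_le_mul_of_nonneg_left (measureReal_mono hsub) (by positivity)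
    _ ≤ ∫ ω, f ω ^ n ∂μ :=
      mul_meas_ge_le_integral_of_nonneg (ae_of_all _ fun ω => pow_nonneg (hf ω) n) hfn _

lemma integral_sq_le_integral_pow_six_div_add [IsProbabilityMeasure μ] {f : Ω → ℝ}
    (hf : Integrable (fun ω => f ω ^ 6) μ) {a : ℝ} (ha : 0 < a) :
    ∫ ω, f ω ^ 2 ∂μ ≤ (∫ ω, f ω ^ 6 ∂μ) / (3 * a ^ 2) + 2 * a / 3 := by
  calc ∫ ω, f ω ^ 2 ∂μ ≤ ∫ ω, (f ω ^ 6 / (3 * a ^ 2) + 2 * a / 3) ∂μ :=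
        integral_mono_of_nonneg (ae_of_all _ fun ω => sq_nonneg _)
          ((hf.div_const _).add (integrable_const _))
          (ae_of_all _ fun ω => sq_le_pow_six_div_add ha _)
    _ = _ := by
      rw [integral_add (hf.div_const _) (integrable_const _), integral_div, integral_const,
        probReal_univ, one_smul]

variable {S : ℕ → Ω → ℝ} {p : ℕ}

lemma measurable_normalizedMax (hS : ∀ v, Measurable (S v)) (T : ℕ) :
    Measurable fun ω => normalizedMax (S · ω) T :=
  Measurable.iSup fun v => Measurable.iSup_Prop _ ((hS v).abs.div_const _)

lemma integrable_normalizedMax_pow (hS : ∀ v, Measurable (S v))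
    (hint : ∀ n, Integrable (fun ω => maxAbs (S · ω) n ^ (2 * p)) μ) {T : ℕ}
    (hT : 1 ≤ T) : Integrable (fun ω => normalizedMax (S · ω) T ^ (2 * p)) μ := by
  have hsum := integrable_finsetSum (range (Nat.log 2 T + 1)) fun k _ =>
    (hint (2 ^ (k + 1))).div_const (2 ^ (p * k))
  refine hsum.mono' ((measurable_normalizedMax hS T).pow_const _).aestronglyMeasurable
    (ae_of_all _ fun ω => ?_)
  rw [Real.norm_of_nonneg (pow_nonneg (normalizedMax_nonneg _ T) _)]
  simpa using normalizedMax_pow_le_sum (S · ω) p hT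

theorem integral_normalizedMax_pow_le (hS : ∀ v, Measurable (S v))
    (hint : ∀ n, Integrable (fun ω => maxAbs (S · ω) n ^ (2 * p)) μ) {c : ℝ}
    (hmom : ∀ z : ℕ, 1 ≤ z →
      ∫ ω, maxAbs (S · ω) z ^ (2 * p) ∂μ ≤ c * (z : ℝ) ^ p)
    {T : ℕ} (hT : 1 ≤ T) :
    ∫ ω, normalizedMax (S · ω) T ^ (2 * p) ∂μ ≤ 2 ^ p * c * (Nat.log 2 T + 1) := by
  have hblock (k : ℕ) :
      Integrable (fun ω => maxAbs (S · ω) (2 ^ (k + 1)) ^ (2 * p) / 2 ^ (p * k)) μ :=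
    (hint _).div_const _
  calc ∫ ω, normalizedMax (S · ω) T ^ (2 * p) ∂μ
      ≤ ∫ ω, ∑ k ∈ range (Nat.log 2 T + 1),
          maxAbs (S · ω) (2 ^ (k + 1)) ^ (2 * p) / 2 ^ (p * k) ∂μ :=
        integral_mono (integrable_normalizedMax_pow hS hint hT)
          (integrable_finsetSum _ fun k _ => hblock k)
          fun ω => normalizedMax_pow_le_sum (S · ω) p hT
    _ = ∑ k ∈ range (Nat.log 2 T + 1),
          (∫ ω, maxAbs (S · ω) (2 ^ (k + 1)) ^ (2 * p) ∂μ) / 2 ^ (p * k) := by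
        rw [integral_finsetSum _ fun k _ => hblock k]
        simp only [integral_div]
    _ ≤ ∑ k ∈ range (Nat.log 2 T + 1), 2 ^ p * c := by
        refine sum_le_sum fun k _ => (div_le_iff₀ (by positivity)).2 ?_
        refine (hmom _ Nat.one_le_two_pow).trans (le_of_eq ?_)
        push_cast
        ring
    _ = 2 ^ p * c * (Nat.log 2 T + 1) := by
        rw [sum_const, card_range, nsmul_eq_mul]
        push_cast
        ring

end Probabilistic

/-- if `E max_{1≤v≤z}|S_v|^6 ≤ c z³` for all `z ≥ 1`, then there are
constants `C, C'` (depending on `c`) with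
`P(max_{1≤v≤T} v^{-1/2}|S_v| > u (log T)^{1/6}) ≤ C u^{-6}` for all `u > 0`, `T ≥ 2`,
and consequently `E(max_{1≤v≤T} v^{-1/2}|S_v|)² ≤ C' (log T)^{1/3}`. -/
theorem normalized_maximum_log_bound
    {Ω : Type*} [MeasurableSpace Ω] (μ : Measure Ω) [IsProbabilityMeasure μ]
    (Y : ℕ → Ω → ℝ) (hY : ∀ s, Measurable (Y s))
    (hint : ∀ n : ℕ, Integrable
      (fun ω => (⨆ v ∈ Finset.Icc 1 n, |∑ s ∈ Finset.Icc 1 v, Y s ω|) ^ 6) μ)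
    (c : ℝ) (hc : 0 < c)
    (hmom : ∀ z : ℕ, 1 ≤ z →
      (∫ ω, (⨆ v ∈ Finset.Icc 1 z, |∑ s ∈ Finset.Icc 1 v, Y s ω|) ^ 6 ∂μ)
        ≤ c * (z : ℝ) ^ 3) :
    ∃ C C' : ℝ, 0 < C ∧ 0 < C' ∧
      ∀ (T : ℕ), 2 ≤ T →
        (∀ u : ℝ, 0 < u →
          (μ {ω | u * Real.log T ^ ((1 : ℝ) / 6) <
              ⨆ v ∈ Finset.Icc 1 T,
                |∑ s ∈ Finset.Icc 1 v, Y s ω| / Real.sqrt v}).toReal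
            ≤ C * u⁻¹ ^ 6) ∧
        (∫ ω, (⨆ v ∈ Finset.Icc 1 T,
            |∑ s ∈ Finset.Icc 1 v, Y s ω| / Real.sqrt v) ^ 2 ∂μ)
          ≤ C' * Real.log T ^ ((1 : ℝ) / 3) := by
  set C := 16 * c / Real.log 2
  have hC : 0 < C := div_pos (by positivity) (Real.log_pos one_lt_two)
  refine ⟨C, (C + 2) / 3, hC, by positivity, fun T hT => ?_⟩
  have hL : 0 < Real.log T := Real.log_pos (by exact_mod_cast hT)
  have hS (v : ℕ) : Measurable fun ω => ∑ s ∈ Icc 1 v, Y s ω :=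
    measurable_sum _ fun s _ => hY s
  have hX6 :
      ∫ ω, normalizedMax (fun v => ∑ s ∈ Icc 1 v, Y s ω) T ^ 6 ∂μ ≤ C * Real.log T :=
    calc _ ≤ 2 ^ 3 * c * (Nat.log 2 T + 1) :=
          integral_normalizedMax_pow_le (p := 3) hS hint hmom (by omega)
      _ ≤ 2 ^ 3 * c * (2 * Real.logb 2 T) := by
          gcongr
          exact_mod_cast natLog_add_one_le_two_mul_logb one_lt_two hT
      _ = C * Real.log T := by rw [Real.logb]; ring
  have hint6 := integrable_normalizedMax_pow (p := 3) hS hint (T := T) (by omega)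
  refine ⟨fun u hu => ?_, ?_⟩
  · have hroot : (Real.log T ^ ((1 : ℝ) / 6)) ^ 6 = Real.log T := by
      rw [one_div]
      exact_mod_cast Real.rpow_inv_natCast_pow hL.le (n := 6) (by norm_num)
    calc _ ≤ (∫ ω, normalizedMax (fun v => ∑ s ∈ Icc 1 v, Y s ω) T ^ 6 ∂μ)
            / (u * Real.log T ^ ((1 : ℝ) / 6)) ^ 6 :=
          measureReal_lt_le_integral_pow_div (fun ω => normalizedMax_nonneg _ T) hint6
            (by positivity)
      _ ≤ C * Real.log T / (u ^ 6 * Real.log T) := by rw [mul_pow, hroot]; gcongr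
      _ = C * u⁻¹ ^ 6 := by field_simp
  · have hcube : (Real.log T ^ ((1 : ℝ) / 3)) ^ 3 = Real.log T := by
      rw [one_div]
      exact_mod_cast Real.rpow_inv_natCast_pow hL.le (n := 3) (by norm_num)
    set a := Real.log T ^ ((1 : ℝ) / 3)
    have ha : 0 < a := by positivity
    calc _ ≤ (∫ ω, normalizedMax (fun v => ∑ s ∈ Icc 1 v, Y s ω) T ^ 6 ∂μ)
            / (3 * a ^ 2) + 2 * a / 3 := integral_sq_le_integral_pow_six_div_add hint6 ha
      _ ≤ C * a ^ 3 / (3 * a ^ 2) + 2 * a / 3 := by rw [hcube]; gcongr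
      _ = (C + 2) / 3 * a := by field_simp
end
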